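/- arXiv:1707.00419 — 2 statements merged into one kernel-verified Lean document; each statement's English description precedes it below -/
import Mathlib

section
/- Let U ⊆ ℝ^d be open and F, G : U × [0,∞) → ℝ be respectively upper and lower semicontinuous. Assume there is C > 0 such that F(x,t) ≤ Ct and G(x,t) ≥ −Ct for all (x,t), and that min(F_t, F) ≤ 0 and max(G_t, G) ≥ 0 hold in the viscosity sense on U × (0,∞). Then F ≤ 0 and G ≥ 0 on all of U × [0,∞). -/
open Real MeasureTheory Filter Topology

noncomputable section

abbrev Spc (d : ℕ) := EuclideanSpace ℝ (Fin d)

/-- The point of `ℝ^d` with integer coordinates `k`. -/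
def latticePt (d : ℕ) (k : Fin d → ℤ) : Spc d :=
  (WithLp.equiv 2 (Fin d → ℝ)).symm (fun i => (k i : ℝ))

/-- `φ : ℝ^d → ℝ` is 1-periodic. -/
def Per1 {d : ℕ} (φ : Spc d → ℝ) : Prop :=
  ∀ (x : Spc d) (k : Fin d → ℤ), φ (x + latticePt d k) = φ x

/-- The nonlocal operator `L^α`, in the symmetrized sense. -/
def Lop {d : ℕ} (K : Spc d → Spc d → ℝ) (u : Spc d → ℝ) (x : Spc d) : ℝ :=
  (1 / 2) * ∫ y : Spc d, (2 * u x - u (x + y) - u (x - y)) * K x y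

/-- An admissible kernel of order `α` with constant `CK`. -/
structure AdmissibleKernel (d : ℕ) (α CK : ℝ) (K : Spc d → Spc d → ℝ) : Prop where
  pos : ∀ x y, 0 < K x y
  per : ∀ y, Per1 fun x => K x y
  smooth : ∀ y, ContDiff ℝ 2 fun x => K x y
  symm : ∀ x y, K x y = K x (-y)
  CK_pos : 0 < CK
  bndK : ∀ (x y : Spc d), y ≠ 0 →
    CK⁻¹ ≤ K x y * ‖y‖ ^ ((d : ℝ) + α) ∧ K x y * ‖y‖ ^ ((d : ℝ) + α) ≤ CK
  bndDK : ∀ (x y : Spc d), y ≠ 0 →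
    CK⁻¹ ≤ ‖fderiv ℝ (fun z => K z y) x‖ * ‖y‖ ^ ((d : ℝ) + α) ∧
      ‖fderiv ℝ (fun z => K z y) x‖ * ‖y‖ ^ ((d : ℝ) + α) ≤ CK
  bndD2K : ∀ (x y : Spc d), y ≠ 0 →
    CK⁻¹ ≤ ‖fderiv ℝ (fderiv ℝ fun z => K z y) x‖ * ‖y‖ ^ ((d : ℝ) + α) ∧
      ‖fderiv ℝ (fderiv ℝ fun z => K z y) x‖ * ‖y‖ ^ ((d : ℝ) + α) ≤ CK

/-- A KPP-type reaction with constants `M`, `mbar`, `Mbar`. -/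
structure KPPReaction (d : ℕ) (M mbar Mbar : ℝ) (f : Spc d → ℝ → ℝ) : Prop where
  per : ∀ s : ℝ, Per1 fun x => f x s
  anti : ∀ x : Spc d, StrictAntiOn (fun s => f x s / s) (Set.Ioi 0)
  zero : ∀ x, f x 0 = 0
  M_pos : 0 < M
  nonpos : ∀ x s, M ≤ s → f x s ≤ 0
  diff0 : ∀ x, DifferentiableAt ℝ (f x) 0
  mbar_pos : 0 < mbar
  Mbar_pos : 0 < Mbar
  kpp : ∀ (x : Spc d) (s : ℝ), 0 ≤ s →
    mbar * s ^ 2 ≤ deriv (f x) 0 * s - f x s ∧ deriv (f x) 0 * s - f x s ≤ Mbar * s ^ 2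

/-- The principal-eigenvalue assumption: `λ₁ < 0` and a bounded 1-periodic `g` with
`L^α[e^g] - μ e^g = λ₁ e^g`, where `μ x = ∂_u f(x,0)`. -/
def PrincipalEigen {d : ℕ} (K : Spc d → Spc d → ℝ) (f : Spc d → ℝ → ℝ)
    (lam1 : ℝ) (g : Spc d → ℝ) : Prop :=
  lam1 < 0 ∧ Per1 g ∧ (∃ C, ∀ x, |g x| ≤ C) ∧
    ∀ x, Lop K (fun z => Real.exp (g z)) x - deriv (f x) 0 * Real.exp (g x)
      = lam1 * Real.exp (g x)

/-- `u` is a bounded positive classical solution of `u_t + L^α[u] = f(x,u)` with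
initial datum `u₀` pinched between `c₁/(1+|x|^{d+α})` and `c₂/(1+|x|^{d+α})`. -/
structure IsSolution (d : ℕ) (α : ℝ) (K : Spc d → Spc d → ℝ) (f : Spc d → ℝ → ℝ)
    (u : Spc d → ℝ → ℝ) (u0 : Spc d → ℝ) (c1 c2 : ℝ) : Prop where
  bdd : ∃ C, ∀ (x : Spc d) (t : ℝ), 0 ≤ t → u x t ≤ C
  pos : ∀ (x : Spc d) (t : ℝ), 0 ≤ t → 0 < u x t
  eqn : ∀ (x : Spc d) (t : ℝ), 0 ≤ t →
    HasDerivAt (fun s => u x s) (f x (u x t) - Lop K (fun z => u z t) x) t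
  init : ∀ x, u x 0 = u0 x
  u0cont : Continuous u0
  c1_pos : 0 < c1
  c1_le_c2 : c1 ≤ c2
  u0bnd : ∀ x : Spc d, c1 / (1 + ‖x‖ ^ ((d : ℝ) + α)) ≤ u0 x ∧
    u0 x ≤ c2 / (1 + ‖x‖ ^ ((d : ℝ) + α))

/-- The rescaled point `x̂ |x|^{1/ε}`. -/
def scalePt {d : ℕ} (ε : ℝ) (x : Spc d) : Spc d := (‖x‖ ^ (1 / ε - 1)) • x

/-- `v^ε(x,t) = ε log u(x̂|x|^{1/ε}, t/ε)`. -/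
def veps {d : ℕ} (u : Spc d → ℝ → ℝ) (ε : ℝ) (p : Spc d × ℝ) : ℝ :=
  ε * Real.log (u (scalePt ε p.1) (p.2 / ε))

/-- The filter describing `ε → 0⁺` and `(y,s) → (x,t)` with `s ≥ 0`. -/
def relaxFilter {d : ℕ} (p : Spc d × ℝ) : Filter (ℝ × (Spc d × ℝ)) :=
  (𝓝[>] (0 : ℝ)) ×ˢ (𝓝 p.1 ×ˢ 𝓝[Set.Ici (0 : ℝ)] p.2)

/-- The half-relaxed upper limit `v*`. -/
def vupper {d : ℕ} (u : Spc d → ℝ → ℝ) (p : Spc d × ℝ) : ℝ :=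
  Filter.limsup (fun q : ℝ × (Spc d × ℝ) => veps u q.1 q.2) (relaxFilter p)

/-- The half-relaxed lower limit `v_*`. -/
def vlower {d : ℕ} (u : Spc d → ℝ → ℝ) (p : Spc d × ℝ) : ℝ :=
  Filter.liminf (fun q : ℝ × (Spc d × ℝ) => veps u q.1 q.2) (relaxFilter p)

/-!
Suppose `F(x₀,t₀) = a > 0`; then `t₀ > 0` because `F ≤ Ct`. Subtract the smooth penalty
`ψ(x,t) = B t² + A ‖x - x₀‖²` with `B t₀² = a/2`: the growth bound `F ≤ Ct` and a large `A`
make `F - ψ ≤ 0` outside a compact box around `(x₀,t₀)`, so by upper semicontinuity `F - ψ`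
attains a positive global maximum at some `(x₁,t₁)` with `t₁ > 0`. There the viscosity
inequality fails: `F(x₁,t₁) > ψ(x₁,t₁) ≥ 0` and `∂ₜψ(x₁,t₁) = 2 B t₁ > 0`.
The statement for `G` is the one for `-G`.
-/

open Set Metric

theorem UpperSemicontinuousOn.exists_isMaxOn_of_le_off {α β : Type*} [TopologicalSpace α]
    [LinearOrder β] {f : α → β} {s k : Set α} (hf : UpperSemicontinuousOn f s)
    (hk : IsCompact k) (hks : k ⊆ s) {p : α} (hp : p ∈ k) (hoff : ∀ x ∈ s \ k, f x ≤ f p) :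
    ∃ z ∈ k, IsMaxOn f s z := by
  obtain ⟨z, hz, hmax⟩ := (hf.mono hks).exists_isMaxOn ⟨p, hp⟩ hk
  refine ⟨z, hz, fun x hx => ?_⟩
  by_cases hxk : x ∈ k
  · exact hmax hxk
  · exact (hoff x ⟨hx, hxk⟩).trans (hmax hp)

section Viscosity

variable {E : Type*} [NormedAddCommGroup E]

/-- `min(∂ₜF, F) ≤ 0` on `U × (0,∞)` in the viscosity sense, tested by global maxima of `F - ψ`
over `U × [0,∞)`. -/
def IsViscositySubsolutionMinDt [NormedSpace ℝ E] (U : Set E) (F : E → ℝ → ℝ) : Prop :=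
  ∀ x₀ ∈ U, ∀ t₀ : ℝ, 0 < t₀ → ∀ ψ : E × ℝ → ℝ,
    (∃ V ∈ 𝓝 ((x₀, t₀) : E × ℝ), ContDiffOn ℝ 1 ψ V) →
    (∀ x ∈ U, ∀ t : ℝ, 0 ≤ t → F x t - ψ (x, t) ≤ 0) →
    F x₀ t₀ - ψ (x₀, t₀) = 0 →
    F x₀ t₀ ≤ 0 ∨ deriv (fun s => ψ (x₀, s)) t₀ ≤ 0

/-- `max(∂ₜG, G) ≥ 0` on `U × (0,∞)` in the viscosity sense, tested by global minima of `G - ψ`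
over `U × [0,∞)`. -/
def IsViscositySupersolutionMaxDt [NormedSpace ℝ E] (U : Set E) (G : E → ℝ → ℝ) : Prop :=
  ∀ x₀ ∈ U, ∀ t₀ : ℝ, 0 < t₀ → ∀ ψ : E × ℝ → ℝ,
    (∃ V ∈ 𝓝 ((x₀, t₀) : E × ℝ), ContDiffOn ℝ 1 ψ V) →
    (∀ x ∈ U, ∀ t : ℝ, 0 ≤ t → 0 ≤ G x t - ψ (x, t)) →
    G x₀ t₀ - ψ (x₀, t₀) = 0 →
    0 ≤ G x₀ t₀ ∨ 0 ≤ deriv (fun s => ψ (x₀, s)) t₀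

theorem IsViscositySupersolutionMaxDt.neg [NormedSpace ℝ E] {U : Set E} {G : E → ℝ → ℝ}
    (hG : IsViscositySupersolutionMaxDt U G) :
    IsViscositySubsolutionMinDt U fun x t => -G x t := by
  intro x₀ hx₀ t₀ ht₀ ψ ⟨V, hV, hψ⟩ hle heq
  have hderiv : deriv (fun s => -ψ (x₀, s)) t₀ = -deriv (fun s => ψ (x₀, s)) t₀ :=
    deriv.fun_neg
  rcases hG x₀ hx₀ t₀ ht₀ (fun p => -ψ p) ⟨V, hV, hψ.neg⟩
    (fun x hx t ht => by linarith [hle x hx t ht]) (by linarith) with h | h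
  · exact Or.inl (by linarith)
  · exact Or.inr (by linarith)

def quadPenalty (x₀ : E) (A B : ℝ) (p : E × ℝ) : ℝ := B * p.2 ^ 2 + A * ‖p.1 - x₀‖ ^ 2

theorem quadPenalty_nonneg (x₀ : E) {A B : ℝ} (hA : 0 ≤ A) (hB : 0 ≤ B) (p : E × ℝ) :
    0 ≤ quadPenalty x₀ A B p := by
  unfold quadPenalty; positivity

theorem continuous_quadPenalty (x₀ : E) (A B : ℝ) : Continuous (quadPenalty x₀ A B) := by
  unfold quadPenalty; fun_prop

theorem contDiff_quadPenalty [InnerProductSpace ℝ E] (x₀ : E) (A B : ℝ) :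
    ContDiff ℝ 1 (quadPenalty x₀ A B) :=
  (contDiff_const.mul (contDiff_snd.pow 2)).add
    (contDiff_const.mul ((contDiff_norm_sq ℝ).comp (contDiff_fst.sub contDiff_const)))

theorem deriv_quadPenalty_add_const (x₀ x : E) (A B M t : ℝ) :
    deriv (fun s => quadPenalty x₀ A B (x, s) + M) t = 2 * B * t := by
  have h := (((hasDerivAt_pow 2 t).const_mul B).add_const (A * ‖x - x₀‖ ^ 2)).add_const M
  simp only [quadPenalty, h.deriv]
  ring

theorem mul_le_quadPenalty_of_not_mem_box {x₀ x : E} {C r T t : ℝ} (hC : 0 ≤ C) (hr : 0 < r)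
    (hT : 0 < T) (ht : 0 ≤ t) (hx : (x, t) ∉ closedBall x₀ r ×ˢ Icc 0 T) :
    C * t ≤ quadPenalty x₀ (C * T / r ^ 2) (C / T) (x, t) := by
  have hspace : 0 ≤ C * T / r ^ 2 * ‖x - x₀‖ ^ 2 := by positivity
  have htime : 0 ≤ C / T * t ^ 2 := by positivity
  unfold quadPenalty
  rcases le_or_gt t T with htT | htT
  · have hxr : r ≤ ‖x - x₀‖ := by
      by_contra! h
      exact hx ⟨mem_closedBall_iff_norm.2 h.le, ht, htT⟩
    calc C * t ≤ C * T / r ^ 2 * r ^ 2 := by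
          rw [div_mul_cancel₀ _ (by positivity)]; exact mul_le_mul_of_nonneg_left htT hC
      _ ≤ C * T / r ^ 2 * ‖x - x₀‖ ^ 2 := by gcongr
      _ ≤ _ := by simp only [le_add_iff_nonneg_left, htime]
  · calc C * t = C / T * (T * t) := by field_simp
      _ ≤ C / T * t ^ 2 := by gcongr; nlinarith
      _ ≤ _ := le_add_of_nonneg_right hspace

theorem exists_isMaxOn_sub_quadPenalty [ProperSpace E] {U : Set E} (hU : IsOpen U)
    {F : E → ℝ → ℝ} {C : ℝ}
    (husc : UpperSemicontinuousOn (fun p : E × ℝ => F p.1 p.2) (U ×ˢ Ici 0))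
    (hbd : ∀ x ∈ U, ∀ t : ℝ, 0 ≤ t → F x t ≤ C * t) {x₀ : E} {t₀ : ℝ} (hx₀ : x₀ ∈ U)
    (ht₀ : 0 < t₀) (ha : 0 < F x₀ t₀) :
    ∃ A B : ℝ, 0 ≤ A ∧ 0 < B ∧ ∃ z ∈ U ×ˢ Ici (0 : ℝ),
      IsMaxOn (fun p => F p.1 p.2 - quadPenalty x₀ A B p) (U ×ˢ Ici 0) z ∧
      0 < F z.1 z.2 - quadPenalty x₀ A B z := by
  set a := F x₀ t₀
  have haC : a ≤ C * t₀ := hbd x₀ hx₀ t₀ ht₀.le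
  have hC : 0 < C := by by_contra! h; nlinarith
  obtain ⟨r, hr, hball⟩ := nhds_basis_closedBall.mem_iff.1 (hU.mem_nhds hx₀)
  -- `T` is chosen so that `B = C / T` satisfies `B t₀² = a / 2`.
  set T := 2 * C * t₀ ^ 2 / a
  have hT : 0 < T := by positivity
  have ht₀T : t₀ ≤ T := by
    rw [le_div_iff₀ ha]; nlinarith
  set f : E × ℝ → ℝ := fun p => F p.1 p.2 - quadPenalty x₀ (C * T / r ^ 2) (C / T) p
  have hf₀ : f (x₀, t₀) = a / 2 := by
    simp only [f, quadPenalty, T, sub_self, norm_zero]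
    field_simp
    ring
  have hfusc : UpperSemicontinuousOn f (U ×ˢ Ici 0) :=
    husc.add (continuous_quadPenalty x₀ _ _).neg.continuousOn.upperSemicontinuousOn
  have hks : closedBall x₀ r ×ˢ Icc 0 T ⊆ U ×ˢ Ici 0 := prod_mono hball Icc_subset_Ici_self
  obtain ⟨z, hzk, hmax⟩ := hfusc.exists_isMaxOn_of_le_off
    (isCompact_closedBall x₀ r |>.prod isCompact_Icc) hks
    (p := (x₀, t₀)) ⟨mem_closedBall_self hr.le, ht₀.le, ht₀T⟩ <| by
      rintro ⟨x, t⟩ ⟨⟨hx, ht⟩, hk⟩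
      have := mul_le_quadPenalty_of_not_mem_box hC.le hr hT ht hk
      have := hbd x hx t ht
      simp only [f] at *
      linarith
  refine ⟨_, _, by positivity, by positivity, z, hks hzk, hmax, ?_⟩
  have := hmax (a := (x₀, t₀)) ⟨hx₀, ht₀.le⟩
  simp only [mem_ofPred_eq] at this
  linarith

theorem IsViscositySubsolutionMinDt.nonpos [InnerProductSpace ℝ E] [ProperSpace E]
    {U : Set E} (hU : IsOpen U) {F : E → ℝ → ℝ} {C : ℝ} (hF : IsViscositySubsolutionMinDt U F)
    (husc : UpperSemicontinuousOn (fun p : E × ℝ => F p.1 p.2) (U ×ˢ Ici 0))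
    (hbd : ∀ x ∈ U, ∀ t : ℝ, 0 ≤ t → F x t ≤ C * t) :
    ∀ x ∈ U, ∀ t : ℝ, 0 ≤ t → F x t ≤ 0 := by
  intro x₀ hx₀ t₀ ht₀
  by_contra! ha
  have ht₀pos : 0 < t₀ := ht₀.lt_of_ne <| by rintro rfl; linarith [hbd x₀ hx₀ 0 le_rfl]
  obtain ⟨A, B, hA, hB, ⟨x₁, t₁⟩, ⟨hx₁, ht₁⟩, hmax, hpos⟩ :=
    exists_isMaxOn_sub_quadPenalty hU husc hbd hx₀ ht₀pos ha
  set M := F x₁ t₁ - quadPenalty x₀ A B (x₁, t₁)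
  have hψ := quadPenalty_nonneg x₀ hA hB.le (x₁, t₁)
  have ht₁pos : 0 < t₁ := lt_of_le_of_ne ht₁ <| by
    rintro rfl; linarith [hbd x₁ hx₁ 0 le_rfl]
  have hle : ∀ x ∈ U, ∀ t : ℝ, 0 ≤ t → F x t - (quadPenalty x₀ A B (x, t) + M) ≤ 0 := by
    intro x hx t ht
    have := hmax (a := (x, t)) ⟨hx, ht⟩
    simp only [mem_ofPred_eq] at this
    linarith
  rcases hF x₁ hx₁ t₁ ht₁pos (fun p => quadPenalty x₀ A B p + M)
    ⟨univ, univ_mem, ((contDiff_quadPenalty x₀ A B).add contDiff_const).contDiffOn⟩ hle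
    (by ring) with h | h
  · linarith
  · rw [deriv_quadPenalty_add_const] at h
    nlinarith

end Viscosity

theorem statement4_general (d : ℕ) (U : Set (Spc d)) (hU : IsOpen U)
    (F G : Spc d → ℝ → ℝ) (C : ℝ)
    (hFusc : UpperSemicontinuousOn (fun p : Spc d × ℝ => F p.1 p.2) (U ×ˢ Set.Ici (0 : ℝ)))
    (hGlsc : LowerSemicontinuousOn (fun p : Spc d × ℝ => G p.1 p.2) (U ×ˢ Set.Ici (0 : ℝ)))
    (hFbd : ∀ x ∈ U, ∀ t : ℝ, 0 ≤ t → F x t ≤ C * t)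
    (hGbd : ∀ x ∈ U, ∀ t : ℝ, 0 ≤ t → -(C * t) ≤ G x t)
    (hFvisc : ∀ x₀ ∈ U, ∀ t₀ : ℝ, 0 < t₀ → ∀ ψ : Spc d × ℝ → ℝ,
      (∃ V ∈ 𝓝 ((x₀, t₀) : Spc d × ℝ), ContDiffOn ℝ 1 ψ V) →
      (∀ x ∈ U, ∀ t : ℝ, 0 ≤ t → F x t - ψ (x, t) ≤ 0) →
      F x₀ t₀ - ψ (x₀, t₀) = 0 →
      F x₀ t₀ ≤ 0 ∨ deriv (fun s => ψ (x₀, s)) t₀ ≤ 0)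
    (hGvisc : ∀ x₀ ∈ U, ∀ t₀ : ℝ, 0 < t₀ → ∀ ψ : Spc d × ℝ → ℝ,
      (∃ V ∈ 𝓝 ((x₀, t₀) : Spc d × ℝ), ContDiffOn ℝ 1 ψ V) →
      (∀ x ∈ U, ∀ t : ℝ, 0 ≤ t → 0 ≤ G x t - ψ (x, t)) →
      G x₀ t₀ - ψ (x₀, t₀) = 0 →
      0 ≤ G x₀ t₀ ∨ 0 ≤ deriv (fun s => ψ (x₀, s)) t₀) :
    (∀ x ∈ U, ∀ t : ℝ, 0 ≤ t → F x t ≤ 0) ∧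
      (∀ x ∈ U, ∀ t : ℝ, 0 ≤ t → 0 ≤ G x t) := by
  refine ⟨IsViscositySubsolutionMinDt.nonpos hU hFvisc hFusc hFbd,
    fun x hx t ht => neg_nonpos.1 ?_⟩
  exact IsViscositySubsolutionMinDt.nonpos (C := C) hU (IsViscositySupersolutionMaxDt.neg hGvisc)
    (continuous_neg.comp_lowerSemicontinuousOn_antitone hGlsc fun _ _ h => neg_le_neg h)
    (fun x hx t ht => by linarith [hGbd x hx t ht]) x hx t ht

/-- If `F` is upper semicontinuous and `G` lower semicontinuous on
`U × [0,∞)`, `F(x,t) ≤ Ct`, `G(x,t) ≥ −Ct`, and `min(F_t,F) ≤ 0`, `max(G_t,G) ≥ 0` hold in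
the viscosity sense on `U × (0,∞)`, then `F ≤ 0` and `G ≥ 0` on `U × [0,∞)`. -/
theorem statement4 (d : ℕ) (hd : 1 ≤ d) (U : Set (Spc d)) (hU : IsOpen U)
    (F G : Spc d → ℝ → ℝ) (C : ℝ) (hC : 0 < C)
    (hFusc : UpperSemicontinuousOn (fun p : Spc d × ℝ => F p.1 p.2) (U ×ˢ Set.Ici (0 : ℝ)))
    (hGlsc : LowerSemicontinuousOn (fun p : Spc d × ℝ => G p.1 p.2) (U ×ˢ Set.Ici (0 : ℝ)))
    (hFbd : ∀ x ∈ U, ∀ t : ℝ, 0 ≤ t → F x t ≤ C * t)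
    (hGbd : ∀ x ∈ U, ∀ t : ℝ, 0 ≤ t → -(C * t) ≤ G x t)
    (hFvisc : ∀ x₀ ∈ U, ∀ t₀ : ℝ, 0 < t₀ → ∀ ψ : Spc d × ℝ → ℝ,
      (∃ V ∈ 𝓝 ((x₀, t₀) : Spc d × ℝ), ContDiffOn ℝ 1 ψ V) →
      (∀ x ∈ U, ∀ t : ℝ, 0 ≤ t → F x t - ψ (x, t) ≤ 0) →
      F x₀ t₀ - ψ (x₀, t₀) = 0 →
      F x₀ t₀ ≤ 0 ∨ deriv (fun s => ψ (x₀, s)) t₀ ≤ 0)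
    (hGvisc : ∀ x₀ ∈ U, ∀ t₀ : ℝ, 0 < t₀ → ∀ ψ : Spc d × ℝ → ℝ,
      (∃ V ∈ 𝓝 ((x₀, t₀) : Spc d × ℝ), ContDiffOn ℝ 1 ψ V) →
      (∀ x ∈ U, ∀ t : ℝ, 0 ≤ t → 0 ≤ G x t - ψ (x, t)) →
      G x₀ t₀ - ψ (x₀, t₀) = 0 →
      0 ≤ G x₀ t₀ ∨ 0 ≤ deriv (fun s => ψ (x₀, s)) t₀) :
    (∀ x ∈ U, ∀ t : ℝ, 0 ≤ t → F x t ≤ 0) ∧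
      (∀ x ∈ U, ∀ t : ℝ, 0 ≤ t → 0 ≤ G x t) :=
  statement4_general d U hU F G C hFusc hGlsc hFbd hGbd hFvisc hGvisc
end
end

section
/- Suppose u : ℝ^d × [0,∞) → ℝ is positive and there exist constants B₀ > |λ₁| > 0, 0 < c₀ ≤ C₀, A₀ > 0 with c₀ e^{−A₀t}/(1 + e^{−|λ₁|t}|x|^{d+α}) ≤ u(x,t) ≤ C₀/(1 + e^{−B₀t}|x|^{d+α}) for all (x,t). Then the half-relaxed limits of v^ε(x,t) = ε log u(x̂|x|^{1/ε}, t/ε) satisfy, for all (x,t) ∈ (ℝ^d∖{0}) × [0,∞): min(0, |λ₁|t − (d+α)log|x|) − A₀t ≤ v_*(x,t) ≤ v*(x,t) ≤ min(0, B₀t − (d+α)log|x|); in particular, at t = 0, v_*(x,0) = v*(x,0) = min(0, −(d+α)log|x|). -/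
open Real MeasureTheory Filter Topology

noncomputable section

lemma auxLogGe (a : ℝ) : max 0 a ≤ Real.log (1 + Real.exp a) := by
  refine max_le (Real.log_nonneg (by linarith [Real.exp_pos a])) ?_
  calc a = Real.log (Real.exp a) := (Real.log_exp a).symm
    _ ≤ _ := Real.log_le_log (Real.exp_pos a) (by linarith)

lemma auxLogLe (a : ℝ) : Real.log (1 + Real.exp a) ≤ Real.log 2 + max 0 a := by
  have h1 : Real.exp a ≤ Real.exp (max 0 a) := Real.exp_le_exp.mpr (le_max_right _ _)
  have h0 : (1:ℝ) ≤ Real.exp (max 0 a) := by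
    rw [← Real.exp_zero]; exact Real.exp_le_exp.mpr (le_max_left _ _)
  calc Real.log (1 + Real.exp a) ≤ Real.log (2 * Real.exp (max 0 a)) :=
        Real.log_le_log (by linarith [Real.exp_pos a]) (by linarith)
    _ = Real.log 2 + max 0 a := by
        rw [Real.log_mul two_ne_zero (Real.exp_pos _).ne', Real.log_exp]

lemma auxScale {d : ℕ} (ε : ℝ) (hε : 0 < ε) (y : Spc d) (hy : y ≠ 0) (cc B s : ℝ) :
    Real.exp (-B * (s / ε)) * ‖scalePt ε y‖ ^ cc
      = Real.exp ((cc * Real.log ‖y‖ - B * s) / ε) := by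
  have hny : (0:ℝ) < ‖y‖ := norm_pos_iff.mpr hy
  have h1 : ‖scalePt ε y‖ = ‖y‖ ^ (1/ε) := by
    rw [scalePt, norm_smul, Real.norm_eq_abs, abs_of_nonneg (Real.rpow_nonneg hny.le _),
      ← Real.rpow_add_one hny.ne', sub_add_cancel]
  rw [h1, ← Real.rpow_mul hny.le, Real.rpow_def_of_pos hny, ← Real.exp_add]
  congr 1
  field_simp
  ring

/-- the rough bounds transfer to the half-relaxed limits. If `u > 0`
satisfies `c₀e^{−A₀t}/(1+e^{−|λ₁|t}|x|^{d+α}) ≤ u ≤ C₀/(1+e^{−B₀t}|x|^{d+α})` with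
`B₀ > |λ₁| > 0`, `0 < c₀ ≤ C₀`, `A₀ > 0`, then for `x ≠ 0` and `t ≥ 0`:
`min(0,|λ₁|t−(d+α)log|x|) − A₀t ≤ v_* ≤ v* ≤ min(0, B₀t−(d+α)log|x|)`, and at `t = 0`
both half-relaxed limits equal `min(0, −(d+α)log|x|)`. -/
theorem statement16 (d : ℕ) (hd : 1 ≤ d) (α lam1 B0 A0 c0 C0 : ℝ)
    (hα : α ∈ Set.Ioo (0 : ℝ) 2)
    (hlam : 0 < |lam1|) (hB0 : |lam1| < B0)
    (hc0 : 0 < c0) (hcC : c0 ≤ C0) (hA0 : 0 < A0)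
    (u : Spc d → ℝ → ℝ)
    (hupos : ∀ (x : Spc d) (t : ℝ), 0 ≤ t → 0 < u x t)
    (hbd : ∀ (x : Spc d) (t : ℝ), 0 ≤ t →
      c0 * Real.exp (-A0 * t) / (1 + Real.exp (-|lam1| * t) * ‖x‖ ^ ((d : ℝ) + α))
          ≤ u x t ∧
        u x t ≤ C0 / (1 + Real.exp (-B0 * t) * ‖x‖ ^ ((d : ℝ) + α))) :
    (∀ x : Spc d, x ≠ 0 → ∀ t : ℝ, 0 ≤ t →
      min 0 (|lam1| * t - ((d : ℝ) + α) * Real.log ‖x‖) - A0 * t ≤ vlower u (x, t) ∧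
      vlower u (x, t) ≤ vupper u (x, t) ∧
      vupper u (x, t) ≤ min 0 (B0 * t - ((d : ℝ) + α) * Real.log ‖x‖)) ∧
    ∀ x : Spc d, x ≠ 0 →
      vlower u (x, 0) = min 0 (-(((d : ℝ) + α) * Real.log ‖x‖)) ∧
      vupper u (x, 0) = min 0 (-(((d : ℝ) + α) * Real.log ‖x‖)) := by
  set cdα : ℝ := (d : ℝ) + α with hcdα
  have hC0 : (0:ℝ) < C0 := lt_of_lt_of_le hc0 hcC
  -- pointwise bounds on veps
  have key : ∀ ε : ℝ, 0 < ε → ∀ y : Spc d, y ≠ 0 → ∀ s : ℝ, 0 ≤ s →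
      ε * Real.log (c0 / 2) - A0 * s + min 0 (|lam1| * s - cdα * Real.log ‖y‖)
        ≤ veps u ε (y, s) ∧
      veps u ε (y, s) ≤ ε * Real.log C0 + min 0 (B0 * s - cdα * Real.log ‖y‖) := by
    intro ε hε y hy s hs
    have hτ : 0 ≤ s / ε := div_nonneg hs hε.le
    obtain ⟨hlo, hhi⟩ := hbd (scalePt ε y) (s / ε) hτ
    have hzpos := hupos (scalePt ε y) (s / ε) hτ
    set w := cdα * Real.log ‖y‖ - B0 * s with hw
    set w' := cdα * Real.log ‖y‖ - |lam1| * s with hw'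
    rw [auxScale ε hε y hy cdα B0 s] at hhi
    rw [auxScale ε hε y hy cdα |lam1| s] at hlo
    have hveps : veps u ε (y, s) = ε * Real.log (u (scalePt ε y) (s / ε)) := rfl
    have hεs : ε * (s / ε) = s := by field_simp
    constructor
    · -- lower bound
      have hden : (0:ℝ) < 1 + Real.exp (w' / ε) := by positivity
      have hl1 := Real.log_le_log (by positivity) hlo
      rw [Real.log_div (by positivity) hden.ne',
        Real.log_mul hc0.ne' (Real.exp_pos _).ne', Real.log_exp] at hl1
      have hl2 : ε * Real.log c0 - A0 * s - ε * Real.log (1 + Real.exp (w' / ε))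
          ≤ veps u ε (y, s) := by
        rw [hveps]
        calc ε * Real.log c0 - A0 * s - ε * Real.log (1 + Real.exp (w' / ε))
            = ε * (Real.log c0 + -A0 * (s / ε) - Real.log (1 + Real.exp (w' / ε))) := by
              field_simp; ring
          _ ≤ ε * Real.log (u (scalePt ε y) (s / ε)) :=
              mul_le_mul_of_nonneg_left hl1 hε.le
      have hl3 := mul_le_mul_of_nonneg_left (auxLogLe (w' / ε)) hε.le
      have hmax : ε * max 0 (w' / ε) = max 0 w' := by
        rcases le_total w' 0 with h | h
        · rw [max_eq_left (div_nonpos_of_nonpos_of_nonneg h hε.le), max_eq_left h, mul_zero]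
        · rw [max_eq_right (div_nonneg h hε.le), max_eq_right h, mul_div_cancel₀ _ hε.ne']
      rw [mul_add, hmax] at hl3
      have hmin : min 0 (|lam1| * s - cdα * Real.log ‖y‖) = -max 0 w' := by
        have hne : |lam1| * s - cdα * Real.log ‖y‖ = -w' := by rw [hw']; ring
        rw [hne]
        simpa using min_neg_neg 0 w'
      rw [hmin, Real.log_div hc0.ne' two_ne_zero]
      linarith
    · -- upper bound
      have hden : (0:ℝ) < 1 + Real.exp (w / ε) := by positivity
      have hu1 := Real.log_le_log hzpos hhi
      rw [Real.log_div hC0.ne' hden.ne'] at hu1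
      have hu2 : veps u ε (y, s)
          ≤ ε * Real.log C0 - ε * Real.log (1 + Real.exp (w / ε)) := by
        rw [hveps]
        calc ε * Real.log (u (scalePt ε y) (s / ε))
            ≤ ε * (Real.log C0 - Real.log (1 + Real.exp (w / ε))) :=
              mul_le_mul_of_nonneg_left hu1 hε.le
          _ = _ := by ring
      have hu3 := mul_le_mul_of_nonneg_left (auxLogGe (w / ε)) hε.le
      have hmax : ε * max 0 (w / ε) = max 0 w := by
        rcases le_total w 0 with h | h
        · rw [max_eq_left (div_nonpos_of_nonpos_of_nonneg h hε.le), max_eq_left h, mul_zero]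
        · rw [max_eq_right (div_nonneg h hε.le), max_eq_right h, mul_div_cancel₀ _ hε.ne']
      rw [hmax] at hu3
      have hmin : min 0 (B0 * s - cdα * Real.log ‖y‖) = -max 0 w := by
        have hne : B0 * s - cdα * Real.log ‖y‖ = -w := by rw [hw]; ring
        rw [hne]
        simpa using min_neg_neg 0 w
      rw [hmin]
      linarith
  have main : ∀ x : Spc d, x ≠ 0 → ∀ t : ℝ, 0 ≤ t →
      min 0 (|lam1| * t - cdα * Real.log ‖x‖) - A0 * t ≤ vlower u (x, t) ∧
      vlower u (x, t) ≤ vupper u (x, t) ∧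
      vupper u (x, t) ≤ min 0 (B0 * t - cdα * Real.log ‖x‖) := by
    intro x hx t ht
    haveI hne : (relaxFilter ((x, t) : Spc d × ℝ)).NeBot := by
      have h3 : (𝓝[Set.Ici (0:ℝ)] t).NeBot := nhdsWithin_neBot_of_mem (Set.mem_Ici.mpr ht)
      exact Filter.prod_neBot.mpr ⟨inferInstance, Filter.prod_neBot.mpr ⟨inferInstance, h3⟩⟩
    have hmono : relaxFilter ((x, t) : Spc d × ℝ) ≤ 𝓝 ((0:ℝ), (x, t)) := by
      rw [nhds_prod_eq, nhds_prod_eq]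
      exact Filter.prod_mono nhdsWithin_le_nhds (Filter.prod_mono le_rfl nhdsWithin_le_nhds)
    have tendAux : ∀ a b B : ℝ, Tendsto (fun q : ℝ × (Spc d × ℝ) =>
        q.1 * a + b * q.2.2 + min 0 (B * q.2.2 - cdα * Real.log ‖q.2.1‖))
        (relaxFilter ((x, t) : Spc d × ℝ))
        (𝓝 (b * t + min 0 (B * t - cdα * Real.log ‖x‖))) := by
      intro a b B
      have hlog : ContinuousAt (fun q : ℝ × (Spc d × ℝ) => Real.log ‖q.2.1‖)
          ((0:ℝ), (x, t)) :=
        ContinuousAt.log (continuous_snd.fst.norm.continuousAt)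
          (by simpa using norm_ne_zero_iff.mpr hx)
      have hcont : ContinuousAt (fun q : ℝ × (Spc d × ℝ) =>
          q.1 * a + b * q.2.2 + min 0 (B * q.2.2 - cdα * Real.log ‖q.2.1‖))
          ((0:ℝ), (x, t)) := by
        have hA : ContinuousAt (fun q : ℝ × (Spc d × ℝ) => q.1 * a + b * q.2.2)
            ((0:ℝ), (x, t)) :=
          ((continuous_fst.mul continuous_const).add
            (continuous_const.mul continuous_snd.snd)).continuousAt
        have hM : ContinuousAt (fun q : ℝ × (Spc d × ℝ) =>
            min 0 (B * q.2.2 - cdα * Real.log ‖q.2.1‖)) ((0:ℝ), (x, t)) :=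
          continuousAt_const.min
            (((continuous_const.mul continuous_snd.snd).continuousAt).sub
              (continuousAt_const.mul hlog))
        exact hA.add hM
      have h0 : (fun q : ℝ × (Spc d × ℝ) =>
          q.1 * a + b * q.2.2 + min 0 (B * q.2.2 - cdα * Real.log ‖q.2.1‖)) ((0:ℝ), (x, t))
          = b * t + min 0 (B * t - cdα * Real.log ‖x‖) := by norm_num
      have h1 := hcont.tendsto.mono_left hmono
      rw [show ((0:ℝ), (x, t)).1 * a + b * ((0:ℝ), (x, t)).2.2
        + min 0 (B * ((0:ℝ), (x, t)).2.2 - cdα * Real.log ‖((0:ℝ), (x, t)).2.1‖)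
        = b * t + min 0 (B * t - cdα * Real.log ‖x‖) from by norm_num] at h1
      exact h1
    have hevP : ∀ᶠ q : ℝ × (Spc d × ℝ) in relaxFilter ((x, t) : Spc d × ℝ),
        0 < q.1 ∧ q.2.1 ≠ 0 ∧ 0 ≤ q.2.2 := by
      have h1 : ∀ᶠ e in 𝓝[>] (0:ℝ), 0 < e := by
        filter_upwards [self_mem_nhdsWithin] with e he using he
      have h2 : ∀ᶠ y in 𝓝 x, y ≠ 0 := eventually_ne_nhds hx
      have h3 : ∀ᶠ s in 𝓝[Set.Ici (0:ℝ)] t, 0 ≤ s := by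
        filter_upwards [self_mem_nhdsWithin] with s hs using hs
      exact (h1.prod_inl _).and (((h2.prod_inl _).and (h3.prod_inr _)).prod_inr _)
    have hub : ∀ᶠ q : ℝ × (Spc d × ℝ) in relaxFilter ((x, t) : Spc d × ℝ),
        veps u q.1 q.2 ≤ q.1 * Real.log C0 + 0 * q.2.2
          + min 0 (B0 * q.2.2 - cdα * Real.log ‖q.2.1‖) := by
      filter_upwards [hevP] with q hq
      obtain ⟨h1, h2, h3⟩ := hq
      have h := (key q.1 h1 q.2.1 h2 q.2.2 h3).2
      rw [show ((q.2.1, q.2.2) : Spc d × ℝ) = q.2 from rfl] at h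
      linarith
    have hlb : ∀ᶠ q : ℝ × (Spc d × ℝ) in relaxFilter ((x, t) : Spc d × ℝ),
        q.1 * Real.log (c0 / 2) + (-A0) * q.2.2
          + min 0 (|lam1| * q.2.2 - cdα * Real.log ‖q.2.1‖) ≤ veps u q.1 q.2 := by
      filter_upwards [hevP] with q hq
      obtain ⟨h1, h2, h3⟩ := hq
      have h := (key q.1 h1 q.2.1 h2 q.2.2 h3).1
      rw [show ((q.2.1, q.2.2) : Spc d × ℝ) = q.2 from rfl] at h
      linarith
    have tU := tendAux (Real.log C0) 0 B0
    have tL := tendAux (Real.log (c0 / 2)) (-A0) |lam1|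
    have hBU : IsBoundedUnder (· ≤ ·) (relaxFilter ((x, t) : Spc d × ℝ))
        (fun q : ℝ × (Spc d × ℝ) => veps u q.1 q.2) := tU.isBoundedUnder_le.mono_le hub
    have hBL : IsBoundedUnder (· ≥ ·) (relaxFilter ((x, t) : Spc d × ℝ))
        (fun q : ℝ × (Spc d × ℝ) => veps u q.1 q.2) := tL.isBoundedUnder_ge.mono_ge hlb
    refine ⟨?_, ?_, ?_⟩
    · have h := liminf_le_liminf hlb tL.isBoundedUnder_ge hBU.isCoboundedUnder_ge
      rw [tL.liminf_eq] at h
      calc min 0 (|lam1| * t - cdα * Real.log ‖x‖) - A0 * t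
          = -A0 * t + min 0 (|lam1| * t - cdα * Real.log ‖x‖) := by ring
        _ ≤ vlower u (x, t) := h
    · exact liminf_le_limsup hBU hBL
    · have h := limsup_le_limsup hub hBL.isCoboundedUnder_le tU.isBoundedUnder_le
      rw [tU.limsup_eq] at h
      calc vupper u (x, t) ≤ 0 * t + min 0 (B0 * t - cdα * Real.log ‖x‖) := h
        _ = min 0 (B0 * t - cdα * Real.log ‖x‖) := by ring
  refine ⟨main, ?_⟩
  intro x hx
  obtain ⟨hA, hB, hC⟩ := main x hx 0 le_rfl
  have eA : min 0 (|lam1| * 0 - cdα * Real.log ‖x‖) - A0 * 0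
      = min 0 (-(cdα * Real.log ‖x‖)) := by norm_num
  have eC : min 0 (B0 * 0 - cdα * Real.log ‖x‖) = min 0 (-(cdα * Real.log ‖x‖)) := by norm_num
  rw [eA] at hA
  rw [eC] at hC
  exact ⟨le_antisymm (hB.trans hC) hA, le_antisymm hC (hA.trans hB)⟩
end
end
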